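/- Let p be prime, 0 < ν < η < 2ν natural numbers, and G = ℤ/p^η the cyclic group generated by w. Define w^i · w^j := w^{i + p^ν i j}. Then · gives G the structure where (w^i · w^j) · w^k = w^i · w^{j+k} for all i,j,k, i.e., the map j ↦ (g ↦ g · w^j) is an action of (ℤ/p^η, +) by bijections on G. -/
import Mathlib


theorem stmt7 (p : ℕ) (hp : p.Prime) (ν η : ℕ)
    (h1 : 0 < ν) (h2 : ν < η) (h3 : η < 2 * ν) :
    ∀ i j kk : ZMod (p ^ η),
      (i + (p : ZMod (p ^ η)) ^ ν * i * j) +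
          (p : ZMod (p ^ η)) ^ ν * (i + (p : ZMod (p ^ η)) ^ ν * i * j) * kk =
        i + (p : ZMod (p ^ η)) ^ ν * i * (j + kk) := by
  intro i j kk
  have h0 : (p : ZMod (p ^ η)) ^ ν * (p : ZMod (p ^ η)) ^ ν = 0 := by
    rw [← pow_add, ← Nat.cast_pow]
    have : p ^ (ν + ν) = p ^ η * p ^ (ν + ν - η) := by
      rw [← pow_add]
      congr 1
      omega
    rw [this, Nat.cast_mul, ZMod.natCast_self, zero_mul]
  linear_combination (i * j * kk) * h0
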